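/- Let X = {x_1,…,x_{3q}} be a finite set with |X| = 3q (q ≥ 1), let 𝒞 = {C_1,…,C_m} be a collection of 3-element subsets of X, and let G(X,𝒞) be the associated graph. If 𝒞 contains an exact cover 𝒞' of X, then {c_j : C_j ∈ 𝒞'} ∪ {z_1,…,z_q} is a restrained dominating set of G(X,𝒞) of cardinality 2q. -/
import Mathlib


/-- A set `D` is a restrained dominating set of `G` if every vertex not in `D`
is adjacent to a vertex in `D` and to a vertex outside `D`. -/
def IsRestrainedDominatingSet {V : Type*} (G : SimpleGraph V) (D : Finset V) : Prop :=
  (∀ v, v ∉ D → ∃ u ∈ D, G.Adj v u) ∧ (∀ v, v ∉ D → ∃ u, u ∉ D ∧ G.Adj v u)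

/-- The vertex type of the graph associated with an X3C instance: the elements
`x_1,…,x_{3q}`, the set-vertices `c_1,…,c_m`, the vertices `w_1,…,w_q`, the vertices
`z_1,…,z_q`, and the extra vertex `r`. -/
abbrev X3CVertex (q m : ℕ) := Fin (3 * q) ⊕ (Fin m ⊕ (Fin q ⊕ (Fin q ⊕ Unit)))

/-- The graph `G(X, 𝒞)` associated with an X3C instance `𝒞 : Fin m → Finset (Fin (3q))`:
edges `x_i c_j` for `x_i ∈ C_j`, all edges `c_i c_j` (a clique on the `c`'s),
edges from `r` to every `x_i`, every `c_j` and every `w_i`, and edges `w_i z_i`. -/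
def X3CGraph (q m : ℕ) (C : Fin m → Finset (Fin (3 * q))) : SimpleGraph (X3CVertex q m) :=
  SimpleGraph.fromRel (fun a b =>
    match a, b with
    | Sum.inl i, Sum.inr (Sum.inl j) => i ∈ C j
    | Sum.inr (Sum.inl _), Sum.inr (Sum.inl _) => True
    | Sum.inr (Sum.inr (Sum.inr (Sum.inr _))), Sum.inl _ => True
    | Sum.inr (Sum.inr (Sum.inr (Sum.inr _))), Sum.inr (Sum.inl _) => True
    | Sum.inr (Sum.inr (Sum.inr (Sum.inr _))), Sum.inr (Sum.inr (Sum.inl _)) => True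
    | Sum.inr (Sum.inr (Sum.inl i)), Sum.inr (Sum.inr (Sum.inr (Sum.inl j))) => i = j
    | _, _ => False)

/-- `s` is an exact cover of `X = Fin (3q)`: every element of `X` lies in exactly one
member `C_j` with `j ∈ s`. -/
def IsExactCover {q m : ℕ} (C : Fin m → Finset (Fin (3 * q))) (s : Finset (Fin m)) : Prop :=
  ∀ i : Fin (3 * q), ∃! j : Fin m, j ∈ s ∧ i ∈ C j

/-- If `𝒞` contains an exact cover `𝒞'` of `X`, then
`{c_j : C_j ∈ 𝒞'} ∪ {z_1,…,z_q}` is a restrained dominating set of `G(X,𝒞)`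
of cardinality `2q`. -/
theorem stmt_17 (q m : ℕ) (hq : 1 ≤ q) (C : Fin m → Finset (Fin (3 * q)))
    (hC : ∀ j, (C j).card = 3)
    (s : Finset (Fin m)) (hs : IsExactCover C s)
    (D : Finset (X3CVertex q m))
    (hD : D = s.image (fun j => (Sum.inr (Sum.inl j) : X3CVertex q m)) ∪
      Finset.univ.image
        (fun i : Fin q => (Sum.inr (Sum.inr (Sum.inr (Sum.inl i))) : X3CVertex q m))) :
    IsRestrainedDominatingSet (X3CGraph q m C) D ∧ D.card = 2 * q := by

  subst hD
  have memD : ∀ v : X3CVertex q m,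
      (v ∈ s.image (fun j => (Sum.inr (Sum.inl j) : X3CVertex q m)) ∪
      Finset.univ.image
        (fun i : Fin q => (Sum.inr (Sum.inr (Sum.inr (Sum.inl i))) : X3CVertex q m))) ↔
      ((∃ j ∈ s, v = Sum.inr (Sum.inl j)) ∨
        (∃ i : Fin q, v = Sum.inr (Sum.inr (Sum.inr (Sum.inl i))))) := by
    intro v
    simp [Finset.mem_union, Finset.mem_image, eq_comm]
  have hscard : s.card = q := by
    have hdisj : ∀ j ∈ s, ∀ k ∈ s, j ≠ k → Disjoint (C j) (C k) := by
      intro j hj k hk hjk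
      rw [Finset.disjoint_left]
      intro i hij hik
      obtain ⟨u, _, hu⟩ := hs i
      exact hjk ((hu j ⟨hj, hij⟩).trans (hu k ⟨hk, hik⟩).symm)
    have hcover : s.biUnion C = Finset.univ := by
      ext i
      simp only [Finset.mem_biUnion, Finset.mem_univ, iff_true]
      obtain ⟨j, ⟨hj, hij⟩, _⟩ := hs i
      exact ⟨j, hj, hij⟩
    have h3 : 3 * s.card = 3 * q := by
      calc 3 * s.card = ∑ j ∈ s, (C j).card := by
            rw [Finset.sum_congr rfl (fun j _ => hC j), Finset.sum_const, smul_eq_mul, mul_comm]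
        _ = (s.biUnion C).card := (Finset.card_biUnion hdisj).symm
        _ = 3 * q := by rw [hcover]; simp
    omega
  obtain ⟨j0, hj0⟩ := Finset.card_pos.mp (by omega : 0 < s.card)
  have i0 : Fin q := ⟨0, hq⟩
  refine ⟨⟨?_, ?_⟩, ?_⟩
  · intro v hv
    rcases v with i | j | i | i | u
    · -- x_i
      obtain ⟨j, ⟨hj, hij⟩, _⟩ := hs i
      refine ⟨Sum.inr (Sum.inl j), (memD _).2 (Or.inl ⟨j, hj, rfl⟩), ?_⟩
      simp [X3CGraph, hij]
    · -- c_j, j ∉ s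
      have hjs : j ∉ s := by
        intro h
        exact hv ((memD _).2 (Or.inl ⟨j, h, rfl⟩))
      refine ⟨Sum.inr (Sum.inl j0), (memD _).2 (Or.inl ⟨j0, hj0, rfl⟩), ?_⟩
      have : j ≠ j0 := fun h => hjs (h ▸ hj0)
      simp [X3CGraph, this]
    · -- w_i
      refine ⟨Sum.inr (Sum.inr (Sum.inr (Sum.inl i))), (memD _).2 (Or.inr ⟨i, rfl⟩), ?_⟩
      simp [X3CGraph]
    · -- z_i : in D, contradiction
      exact absurd ((memD _).2 (Or.inr ⟨i, rfl⟩)) hv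
    · -- r
      refine ⟨Sum.inr (Sum.inl j0), (memD _).2 (Or.inl ⟨j0, hj0, rfl⟩), ?_⟩
      simp [X3CGraph]
  · intro v hv
    have hr : (Sum.inr (Sum.inr (Sum.inr (Sum.inr ()))) : X3CVertex q m) ∉
        s.image (fun j => (Sum.inr (Sum.inl j) : X3CVertex q m)) ∪
        Finset.univ.image
          (fun i : Fin q => (Sum.inr (Sum.inr (Sum.inr (Sum.inl i))) : X3CVertex q m)) := by
      intro h
      rcases (memD _).1 h with ⟨j, _, h⟩ | ⟨i, h⟩ <;> simp at h
    rcases v with i | j | i | i | u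
    · exact ⟨_, hr, by simp [X3CGraph]⟩
    · exact ⟨_, hr, by simp [X3CGraph]⟩
    · exact ⟨_, hr, by simp [X3CGraph]⟩
    · -- z_i in D
      exact absurd ((memD _).2 (Or.inr ⟨i, rfl⟩)) hv
    · -- r : adjacent to w_{i0}, which is not in D
      refine ⟨Sum.inr (Sum.inr (Sum.inl i0)), ?_, by simp [X3CGraph]⟩
      intro h
      rcases (memD _).1 h with ⟨j, _, h⟩ | ⟨i, h⟩ <;> simp at h
  · rw [Finset.card_union_of_disjoint]
    · rw [Finset.card_image_of_injective _ (by intro a b h; simpa using h),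
        Finset.card_image_of_injective _ (by intro a b h; simpa using h),
        hscard, Finset.card_univ, Fintype.card_fin]
      omega
    · rw [Finset.disjoint_left]
      rintro v hv1 hv2
      simp only [Finset.mem_image] at hv1 hv2
      obtain ⟨j, _, rfl⟩ := hv1
      obtain ⟨i, _, h⟩ := hv2
      simp at h
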